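/- arXiv:2107.08154 — 4 statements merged into one kernel-verified Lean document; each statement's English description precedes it below -/
import Mathlib

section
/- Suppose G is a multigraph with a pendant vertex v of degree k ≥ 1 (all k edges join v to a single neighbor u), and let G' = G - v. Then for every m ≥ k, P_DP(G,m) = (m-k)·P_DP(G',m). -/
/-- A finite-multiplicity loopless multigraph on vertex set `V`:
`mult u v` is the number of parallel edges joining `u` and `v`. -/
structure Multigraph (V : Type) where
  mult : V → V → ℕ
  symm : ∀ u v, mult u v = mult v u
  loopless : ∀ v, mult v v = 0

/-- A full `m`-fold cover of a multigraph `G`.  The list of a vertex `u` is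
identified with `{u} × Fin m`; for each ordered pair `(u,v)` and each edge index
`i` (only indices `i < G.mult u v` are relevant) the corresponding perfect
matching between the two lists is recorded as a permutation of `Fin m`, the two
orientations of an edge giving inverse permutations. -/
structure FullCover {V : Type} (G : Multigraph V) (m : ℕ) where
  perm : V → V → ℕ → (Fin m ≃ Fin m)
  compat : ∀ u v i, perm v u i = (perm u v i).symm

/-- `f` (choosing one list element per vertex) is an `H`-coloring: it avoids all
cross edges of the cover. -/
def FullCover.IsColoring {V : Type} {G : Multigraph V} {m : ℕ}
    (c : FullCover G m) (f : V → Fin m) : Prop :=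
  ∀ u v i, i < G.mult u v → (c.perm u v i) (f u) ≠ f v

/-- The number of `H`-colorings of `G` for the cover `c`. -/
noncomputable def FullCover.numColorings {V : Type} {G : Multigraph V} {m : ℕ}
    (c : FullCover G m) : ℕ :=
  Nat.card {f : V → Fin m // c.IsColoring f}

/-- The DP color function: the minimum number of colorings over all full
`m`-fold covers. -/
noncomputable def Multigraph.PDP {V : Type} (G : Multigraph V) (m : ℕ) : ℕ :=
  sInf {n | ∃ c : FullCover G m, n = c.numColorings}

/-- The dual DP color function: the maximum number of colorings over all full
`m`-fold covers. -/
noncomputable def Multigraph.PDPdual {V : Type} (G : Multigraph V) (m : ℕ) : ℕ :=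
  sSup {n | ∃ c : FullCover G m, n = c.numColorings}

/-- The number of proper `m`-colorings of (the underlying graph of) `G`. -/
noncomputable def Multigraph.properCount {V : Type} (G : Multigraph V) (m : ℕ) : ℕ :=
  Nat.card {f : V → Fin m // ∀ u v, 0 < G.mult u v → f u ≠ f v}

/-- The multigraph obtained from `G` by deleting the vertex `v` (and all edges
incident to it). -/
def Multigraph.deleteVertex {V : Type} (G : Multigraph V) (v : V) :
    Multigraph {x : V // x ≠ v} where
  mult a b := G.mult a.1 b.1
  symm := by intro a b; (try dsimp only); rw [G.symm]
  loopless := by intro a; (try dsimp only); rw [G.loopless]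

/-
Restricting a cover of `G` to `G - v` and splitting off the color of `v` identifies the colorings
of `G` with pairs (coloring `g` of `G - v`, color of `v` not matched to `g u` by any of the `k`
edges `vu`). At most `k` colors are blocked, so every cover of `G` has at least `m - k` times as
many colorings as its restriction. Conversely, an optimal cover of `G - v` extends to `G` by
letting the `k` edges `vu` act by the rotations `a ↦ a + i`, `i < k`, of `Fin m`. These matchings
are pairwise disjoint, so they block exactly `min k m` colors and the bound is attained.
-/

open Finset

theorem Nat.card_fin_forall_lt_ne {m k : ℕ} (g : ℕ → Fin m) :
    Nat.card {j : Fin m // ∀ i < k, g i ≠ j} = m - #((range k).image g) := by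
  classical
  have e : {j : Fin m // ∀ i < k, g i ≠ j} ≃ {j // j ∈ univ \ (range k).image g} :=
    Equiv.subtypeEquivRight fun j => by simp [eq_comm]
  rw [Nat.card_congr e, Nat.card_eq_fintype_card, Fintype.card_coe,
    card_sdiff_of_subset (subset_univ _), Finset.card_univ, Fintype.card_fin]

def Equiv.subtypeProdSndEquivSigma {α β : Type*} (p : β → Prop) (q : β → α → Prop) :
    {x : α × β // p x.2 ∧ q x.2 x.1} ≃ Σ b : {b // p b}, {a // q b a} where
  toFun x := ⟨⟨x.1.2, x.2.1⟩, x.1.1, x.2.2⟩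
  invFun y := ⟨(y.2.1, y.1.1), y.1.2, y.2.2⟩

theorem Nat.mul_card_le_card_sigma {α : Type*} [Finite α] {β : α → Type*} [∀ a, Finite (β a)]
    {n : ℕ} (h : ∀ a, n ≤ Nat.card (β a)) : n * Nat.card α ≤ Nat.card (Σ a, β a) := by
  have := Fintype.ofFinite α
  rw [Nat.card_sigma, Nat.card_eq_fintype_card, mul_comm, ← smul_eq_mul, ← Finset.card_univ,
    ← Finset.sum_const]
  exact Finset.sum_le_sum fun a _ => h a

theorem Nat.card_sigma_of_card_eq {α : Type*} [Finite α] {β : α → Type*} [∀ a, Finite (β a)]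
    {n : ℕ} (h : ∀ a, Nat.card (β a) = n) : Nat.card (Σ a, β a) = n * Nat.card α := by
  have := Fintype.ofFinite α
  rw [Nat.card_sigma, Nat.card_eq_fintype_card, mul_comm, ← smul_eq_mul, ← Finset.card_univ,
    ← Finset.sum_const]
  exact Finset.sum_congr rfl fun a _ => h a

theorem finRotate_pow_apply_of_lt {m i : ℕ} (hi : i < m) (a : Fin m) :
    (finRotate m ^ i) a = a + ⟨i, hi⟩ := by
  rw [Equiv.Perm.coe_pow, ← finCycle_apply, finCycle_eq_finRotate_iterate]

theorem card_image_finRotate_pow (m k : ℕ) (a : Fin m) :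
    #((range k).image fun i => (finRotate m ^ i) a) = min k m := by
  have : NeZero m := NeZero.of_pos a.pos
  have hinj : ∀ n ≤ m, Set.InjOn (fun i => (finRotate m ^ i) a) (range n) := by
    intro n hn i hi j hj hij
    simp only [coe_range, Set.mem_Iio] at hi hj
    simp only [finRotate_pow_apply_of_lt (hi.trans_le hn),
      finRotate_pow_apply_of_lt (hj.trans_le hn), add_right_inj, Fin.mk.injEq] at hij
    exact hij
  rcases le_total k m with hkm | hmk
  · rw [card_image_of_injOn (hinj k hkm), card_range, min_eq_left hkm]
  · rw [min_eq_right hmk]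
    refine le_antisymm (card_le_univ _ |>.trans_eq (Fintype.card_fin m)) ?_
    calc m = #((range m).image fun i => (finRotate m ^ i) a) := by
          rw [card_image_of_injOn (hinj m le_rfl), card_range]
      _ ≤ _ := card_le_card (image_subset_image (range_subset_range.2 hmk))

namespace FullCover

variable {V : Type} {G : Multigraph V} {m : ℕ}

instance : Inhabited (FullCover G m) :=
  ⟨⟨fun _ _ _ => Equiv.refl _, fun _ _ _ => rfl⟩⟩

theorem ext_perm {c d : FullCover G m} (h : c.perm = d.perm) : c = d := by
  cases c; cases d; cases h; rfl

def restrict (c : FullCover G m) (v : V) : FullCover (G.deleteVertex v) m where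
  perm a b i := c.perm a b i
  compat a b i := c.compat a b i

variable {u v : V} {k : ℕ}

theorem isColoring_iff_restrict (hdeg : G.mult v u = k) (hpend : ∀ w, w ≠ u → G.mult v w = 0)
    (c : FullCover G m) (f : V → Fin m) :
    c.IsColoring f ↔
      (c.restrict v).IsColoring (fun x => f x) ∧ ∀ i < k, c.perm u v i (f u) ≠ f v := by
  have hdeg' : G.mult u v = k := G.symm u v ▸ hdeg
  refine ⟨fun hf => ⟨fun a b i hi => hf a b i hi, fun i hi => hf u v i (hdeg' ▸ hi)⟩, ?_⟩
  rintro ⟨hrest, hv⟩ a b i hi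
  by_cases ha : a = v
  · subst ha
    have hb : b = u := by
      by_contra hb
      rw [hpend b hb] at hi
      exact Nat.not_lt_zero _ hi
    subst hb
    rw [c.compat, Ne, Equiv.symm_apply_eq]
    exact (hv i (hdeg ▸ hi)).symm
  · by_cases hb : b = v
    · subst hb
      have hau : a = u := by
        by_contra hau
        rw [G.symm, hpend a hau] at hi
        exact Nat.not_lt_zero _ hi
      subst hau
      exact hv i (hdeg' ▸ hi)
    · exact hrest ⟨a, ha⟩ ⟨b, hb⟩ i hi

variable [DecidableEq V]

section Pendant

variable (hdeg : G.mult v u = k) (hpend : ∀ w, w ≠ u → G.mult v w = 0)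
include hdeg hpend

def coloringsEquivSigma (huv : u ≠ v) (c : FullCover G m) :
    {f // c.IsColoring f} ≃
      Σ g : {g // (c.restrict v).IsColoring g},
        {j : Fin m // ∀ i < k, c.perm u v i (g.1 ⟨u, huv⟩) ≠ j} :=
  (Equiv.subtypeEquiv (Equiv.funSplitAt v (Fin m))
    (isColoring_iff_restrict hdeg hpend c)).trans
    (Equiv.subtypeProdSndEquivSigma (c.restrict v).IsColoring
      fun g j => ∀ i < k, c.perm u v i (g ⟨u, huv⟩) ≠ j)

theorem sub_mul_numColorings_restrict_le [Finite V] (huv : u ≠ v) (c : FullCover G m) :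
    (m - k) * (c.restrict v).numColorings ≤ c.numColorings := by
  rw [numColorings, numColorings, Nat.card_congr (coloringsEquivSigma hdeg hpend huv c)]
  refine Nat.mul_card_le_card_sigma fun g => ?_
  rw [Nat.card_fin_forall_lt_ne]
  exact Nat.sub_le_sub_left (card_image_le.trans (card_range k).le) m

end Pendant

def extend (huv : u ≠ v) (c : FullCover (G.deleteVertex v) m) : FullCover G m where
  perm a b i :=
    if ha : a = v then (if b = u then (finRotate m ^ i).symm else Equiv.refl _)
    else if hb : b = v then (if a = u then finRotate m ^ i else Equiv.refl _)
    else c.perm ⟨a, ha⟩ ⟨b, hb⟩ i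
  compat a b i := by
    by_cases ha : a = v <;> by_cases hb : b = v
    · simp [ha, hb, huv.symm]
    · by_cases hbu : b = u <;> simp [ha, hb, hbu, huv]
    · by_cases hau : a = u <;> simp [ha, hb, hau, huv]
    · simp [ha, hb, c.compat ⟨a, ha⟩ ⟨b, hb⟩ i]

theorem restrict_extend (huv : u ≠ v) (c : FullCover (G.deleteVertex v) m) :
    (c.extend huv).restrict v = c :=
  ext_perm <| funext fun a => funext fun b => funext fun i => by
    simp [restrict, extend, a.2, b.2]

theorem numColorings_extend [Finite V] (huv : u ≠ v) (hdeg : G.mult v u = k)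
    (hpend : ∀ w, w ≠ u → G.mult v w = 0) (c : FullCover (G.deleteVertex v) m) :
    (c.extend huv).numColorings = (m - k) * c.numColorings := by
  have hperm : ∀ i, (c.extend huv).perm u v i = finRotate m ^ i := fun i => by
    simp [extend, huv]
  rw [numColorings, Nat.card_congr (coloringsEquivSigma hdeg hpend huv _)]
  conv_rhs => rw [← restrict_extend huv c, numColorings]
  refine Nat.card_sigma_of_card_eq fun g => ?_
  rw [Nat.card_fin_forall_lt_ne]
  simp only [hperm, card_image_finRotate_pow]
  omega

end FullCover

namespace Multigraph

variable {V : Type} {G : Multigraph V} {m : ℕ}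

theorem PDP_le (c : FullCover G m) : G.PDP m ≤ c.numColorings :=
  Nat.sInf_le ⟨c, rfl⟩

theorem exists_numColorings_eq_PDP (G : Multigraph V) (m : ℕ) :
    ∃ c : FullCover G m, c.numColorings = G.PDP m :=
  (Nat.sInf_mem ⟨_, default, rfl⟩ : G.PDP m ∈ _).imp fun _ h => h.symm

theorem le_PDP {n : ℕ} (h : ∀ c : FullCover G m, n ≤ c.numColorings) : n ≤ G.PDP m :=
  le_csInf ⟨_, default, rfl⟩ fun _ ⟨c, hc⟩ => hc ▸ h c

end Multigraph

theorem PDP_pendant_general {V : Type} [Fintype V] [DecidableEq V]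
    (G : Multigraph V) (u v : V) (k : ℕ) (huv : u ≠ v)
    (hdeg : G.mult v u = k) (hpend : ∀ w, w ≠ u → G.mult v w = 0)
    (m : ℕ) :
    G.PDP m = (m - k) * (G.deleteVertex v).PDP m := by
  obtain ⟨c₀, hc₀⟩ := (G.deleteVertex v).exists_numColorings_eq_PDP m
  refine le_antisymm ?_ (Multigraph.le_PDP fun c => ?_)
  · calc G.PDP m ≤ (c₀.extend huv).numColorings := Multigraph.PDP_le _
      _ = (m - k) * (G.deleteVertex v).PDP m := by
        rw [FullCover.numColorings_extend huv hdeg hpend, hc₀]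
  · calc (m - k) * (G.deleteVertex v).PDP m ≤ (m - k) * (c.restrict v).numColorings :=
          Nat.mul_le_mul_left _ (Multigraph.PDP_le _)
      _ ≤ c.numColorings := FullCover.sub_mul_numColorings_restrict_le hdeg hpend huv c

/-- If `v` is a pendant vertex of degree `k ≥ 1` in the multigraph `G` (all `k`
edges join `v` to the single neighbor `u`) and `G' = G - v`, then for every
`m ≥ k`, `P_DP(G,m) = (m-k)·P_DP(G',m)`. -/
theorem PDP_pendant {V : Type} [Fintype V] [DecidableEq V]
    (G : Multigraph V) (u v : V) (k : ℕ) (hk : 1 ≤ k) (huv : u ≠ v)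
    (hdeg : G.mult v u = k) (hpend : ∀ w, w ≠ u → G.mult v w = 0)
    (m : ℕ) (hm : k ≤ m) :
    G.PDP m = (m - k) * (G.deleteVertex v).PDP m :=
  PDP_pendant_general G u v k huv hdeg hpend m
end

section
/- Let G be a multigraph, H = (L,H,M) a full m-fold cover of G, and e an edge of G with endpoints u and v. Then the number of H-colorings of G satisfies P_DP(G,H) ≥ P_DP(G-e, H-e) - P_DP(G·e, H·e), where H-e and H·e are the induced covers of G-e and G·e. -/
/-- The multigraph obtained from `G` by deleting one of the edges joining
`u` and `v`. -/
def Multigraph.deleteEdge {V : Type} [DecidableEq V] (G : Multigraph V) (u v : V) :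
    Multigraph V where
  mult x y := if (x = u ∧ y = v) ∨ (x = v ∧ y = u) then G.mult x y - 1 else G.mult x y
  symm := by
    intro x y
    try dsimp only
    by_cases h : (x = u ∧ y = v) ∨ (x = v ∧ y = u)
    · rw [if_pos h, if_pos (by tauto), G.symm]
    · rw [if_neg h, if_neg (by tauto), G.symm]
  loopless := by
    intro x
    try dsimp only
    by_cases h : (x = u ∧ x = v) ∨ (x = v ∧ x = u)
    · rw [if_pos h, G.loopless]
    · rw [if_neg h, G.loopless]

/-- The multigraph obtained from `G` by contracting an edge joining `u` and `v`:
the vertex `v` is removed, the merged vertex is `u`, loops created at the merged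
vertex are deleted, and all other parallel edges are retained. -/
def Multigraph.contractEdge {V : Type} [DecidableEq V] (G : Multigraph V) (u v : V) :
    Multigraph {x : V // x ≠ v} where
  mult x y :=
    if x.1 = u ∧ y.1 = u then 0
    else if x.1 = u then G.mult u y.1 + G.mult v y.1
    else if y.1 = u then G.mult x.1 u + G.mult x.1 v
    else G.mult x.1 y.1
  symm := by
    intro x y
    try dsimp only
    by_cases h1 : x.1 = u <;> by_cases h2 : y.1 = u <;>
      simp only [h1, h2, and_true, and_false, true_and, false_and, if_true, if_false,
        ite_true, ite_false, if_pos, if_neg, not_false_iff] <;>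
      first
        | rfl
        | (rw [G.symm u, G.symm v])
        | rw [G.symm]
  loopless := by
    intro x
    try dsimp only
    by_cases h : x.1 = u
    · rw [if_pos ⟨h, h⟩]
    · rw [if_neg (by tauto), if_neg h, if_neg h, G.loopless]

/-- The cover of `G - e` induced by a cover of `G`, where `e` is the `i`-th edge
joining `u` and `v`: the matching of `e` is deleted and the remaining matchings
between the lists of `u` and `v` are reindexed. -/
def FullCover.deleteEdge {V : Type} [DecidableEq V] {G : Multigraph V} {m : ℕ}
    (c : FullCover G m) (u v : V) (i : ℕ) : FullCover (G.deleteEdge u v) m where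
  perm x y j :=
    if (x = u ∧ y = v) ∨ (x = v ∧ y = u) then
      c.perm x y (if j < i then j else j + 1)
    else c.perm x y j
  compat := by
    intro x y j
    try dsimp only
    by_cases h : (x = u ∧ y = v) ∨ (x = v ∧ y = u)
    · rw [if_pos (by tauto), if_pos h, c.compat]
    · rw [if_neg (by tauto), if_neg h, c.compat]

/-- The cover of `G · e` induced by a cover of `G`, where `e` is the `i`-th edge
joining `u` and `v`: the lists of `u` and `v` are merged along the matching of
`e` (with the merged vertex labelled `u`), and all other matchings are carried
over accordingly. -/
def FullCover.contractEdge {V : Type} [DecidableEq V] {G : Multigraph V} {m : ℕ}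
    (c : FullCover G m) (u v : V) (i : ℕ) : FullCover (G.contractEdge u v) m where
  perm x y j :=
    if x.1 = u ∧ y.1 = u then Equiv.refl _
    else if x.1 = u then
      (if j < G.mult u y.1 then c.perm u y.1 j
       else (c.perm u v i).trans (c.perm v y.1 (j - G.mult u y.1)))
    else if y.1 = u then
      (if j < G.mult x.1 u then c.perm x.1 u j
       else (c.perm x.1 v (j - G.mult x.1 u)).trans (c.perm u v i).symm)
    else c.perm x.1 y.1 j
  compat := by
    intro x y j
    try dsimp only
    by_cases h1 : x.1 = u <;> by_cases h2 : y.1 = u <;>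
      simp only [h1, h2, and_true, and_false, true_and, false_and, if_true, if_false,
        ite_true, ite_false, not_false_iff]
    · rfl
    · rw [G.symm y.1 u]
      by_cases hj : j < G.mult u y.1
      · rw [if_pos hj, if_pos hj, c.compat]
      · rw [if_neg hj, if_neg hj, c.compat]
        rfl
    · rw [G.symm x.1 u]
      by_cases hj : j < G.mult u x.1
      · rw [if_pos hj, if_pos hj, c.compat]
      · rw [if_neg hj, if_neg hj, c.compat x.1 v (j - G.mult u x.1)]
        rfl
    · rw [c.compat]

/-! A coloring `f` of `H - e` either avoids the matching `M(e)`, and is then a coloring of `H`,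
or uses it, i.e. `f v` is the partner of `f u`; then `f` is determined by its restriction away
from `v`, which is a coloring of `H · e`.  This splitting injects the colorings of `H - e` into
the disjoint union of the colorings of `H` and of `H · e`. -/

theorem Multigraph.ne_of_mult_pos {V : Type} (G : Multigraph V) {u v : V}
    (h : 0 < G.mult u v) : u ≠ v := by
  rintro rfl
  exact h.ne' (G.loopless u)

namespace FullCover

variable {V : Type} {G : Multigraph V} {m : ℕ} (c : FullCover G m)

theorem perm_apply_ne_comm {u v : V} {j : ℕ} {a b : Fin m} :
    c.perm v u j b ≠ a ↔ c.perm u v j a ≠ b := by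
  rw [c.compat, ne_eq, Equiv.symm_apply_eq, ne_comm]

variable [DecidableEq V] {c} {u v : V} {i : ℕ} {f : V → Fin m}

theorem IsColoring.perm_ne_of_deleteEdge (hf : (c.deleteEdge u v i).IsColoring f) {x y : V}
    (hxy : ¬((x = u ∧ y = v) ∨ (x = v ∧ y = u))) {j : ℕ} (hj : j < G.mult x y) :
    c.perm x y j (f x) ≠ f y := by
  simpa only [FullCover.deleteEdge, if_neg hxy] using
    hf x y j (by simpa only [Multigraph.deleteEdge, if_neg hxy] using hj)

theorem IsColoring.perm_ne_of_deleteEdge_of_ne (hf : (c.deleteEdge u v i).IsColoring f)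
    (hi : i < G.mult u v) {j : ℕ} (hj : j < G.mult u v) (hji : j ≠ i) :
    c.perm u v j (f u) ≠ f v := by
  have hmult : (G.deleteEdge u v).mult u v = G.mult u v - 1 := by
    simp [Multigraph.deleteEdge]
  rcases lt_or_gt_of_ne hji with hlt | hgt
  · simpa only [FullCover.deleteEdge, and_self, true_or, if_true, if_pos hlt] using
      hf u v j (by omega)
  · have hidx : ¬(j - 1 < i) := by omega
    simpa only [FullCover.deleteEdge, and_self, true_or, if_true, if_neg hidx, Nat.sub_add_cancel
      (Nat.one_le_of_lt hgt)] using hf u v (j - 1) (by omega)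

theorem IsColoring.of_deleteEdge (hf : (c.deleteEdge u v i).IsColoring f)
    (hi : i < G.mult u v) (he : c.perm u v i (f u) ≠ f v) : c.IsColoring f := by
  have avoids_uv : ∀ j < G.mult u v, c.perm u v j (f u) ≠ f v := fun j hj =>
    if hji : j = i then hji ▸ he else hf.perm_ne_of_deleteEdge_of_ne hi hj hji
  intro x y j hj
  by_cases hxy : (x = u ∧ y = v) ∨ (x = v ∧ y = u)
  · rcases hxy with ⟨rfl, rfl⟩ | ⟨rfl, rfl⟩
    · exact avoids_uv j hj
    · exact (c.perm_apply_ne_comm).2 (avoids_uv j (G.symm x y ▸ hj))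
  · exact hf.perm_ne_of_deleteEdge hxy hj

theorem IsColoring.contractEdge_of_deleteEdge (hf : (c.deleteEdge u v i).IsColoring f)
    (huv : u ≠ v) (he : c.perm u v i (f u) = f v) :
    (c.contractEdge u v i).IsColoring (fun x => f x.1) := by
  have src_off_uv : ∀ {x y : V}, x ≠ u → x ≠ v → ∀ {j}, j < G.mult x y →
      c.perm x y j (f x) ≠ f y :=
    fun hxu hxv _ hj => hf.perm_ne_of_deleteEdge (by tauto) hj
  have tgt_off_uv : ∀ {x y : V}, y ≠ u → y ≠ v → ∀ {j}, j < G.mult x y →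
      c.perm x y j (f x) ≠ f y :=
    fun hyu hyv _ hj => (c.perm_apply_ne_comm).1 (src_off_uv hyu hyv (G.symm _ _ ▸ hj))
  -- the matchings leaving the merged vertex are those leaving `u`, then those leaving `v`
  -- precomposed with `M(e)`, which sends `f u` to `f v`
  have from_merged : ∀ y : {x : V // x ≠ v}, y.1 ≠ u →
      ∀ j < (G.contractEdge u v).mult ⟨u, huv⟩ y,
        (c.contractEdge u v i).perm ⟨u, huv⟩ y j (f u) ≠ f y.1 := by
    intro y hyu j hj
    simp only [Multigraph.contractEdge, FullCover.contractEdge, hyu, and_false,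
      if_false, if_true] at hj ⊢
    split_ifs with hju
    · exact tgt_off_uv hyu y.2 hju
    · rw [Equiv.trans_apply, he]
      exact tgt_off_uv hyu y.2 (by omega)
  rintro ⟨x, hxv⟩ ⟨y, hyv⟩ j hj
  by_cases hxu : x = u <;> by_cases hyu : y = u
  · simp [Multigraph.contractEdge, hxu, hyu] at hj
  · obtain rfl := hxu
    exact from_merged ⟨y, hyv⟩ hyu j hj
  · obtain rfl := hyu
    exact (perm_apply_ne_comm _).2
      (from_merged ⟨x, hxv⟩ hxu j ((G.contractEdge y v).symm _ _ ▸ hj))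
  · simp only [Multigraph.contractEdge, FullCover.contractEdge, hxu, hyu, and_false,
      if_false] at hj ⊢
    exact src_off_uv hxu hxv hj

theorem numColorings_deleteEdge_le [Finite V] (c : FullCover G m) (hi : i < G.mult u v) :
    (c.deleteEdge u v i).numColorings ≤ c.numColorings + (c.contractEdge u v i).numColorings := by
  have huv : u ≠ v := G.ne_of_mult_pos (Nat.zero_lt_of_lt hi)
  let split : {f // (c.deleteEdge u v i).IsColoring f} →
      {f // c.IsColoring f} ⊕ {g // (c.contractEdge u v i).IsColoring g} := fun f =>
    if he : c.perm u v i (f.1 u) = f.1 v then .inr ⟨_, f.2.contractEdge_of_deleteEdge huv he⟩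
    else .inl ⟨f.1, f.2.of_deleteEdge hi he⟩
  have split_injective : Function.Injective split := by
    rintro ⟨f, hf⟩ ⟨f', hf'⟩ heq
    simp only [split] at heq
    split_ifs at heq with he he'
    · simp only [Sum.inr.injEq, Subtype.mk.injEq] at heq
      refine Subtype.ext (funext fun x => ?_)
      dsimp only
      by_cases hxv : x = v
      · rw [hxv, ← he, ← he', congrFun heq ⟨u, huv⟩]
      · exact congrFun heq ⟨x, hxv⟩
    · simp only [Sum.inl.injEq, Subtype.mk.injEq] at heq
      exact Subtype.ext heq
  exact (Nat.card_le_card_of_injective split split_injective).trans_eq Nat.card_sum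

end FullCover

/-- Cover-level deletion-contraction inequality: if `c` is a full `m`-fold cover
of `G` and `e` is the `i`-th edge joining `u` and `v`, then
`P_DP(G,c) ≥ P_DP(G-e, c-e) - P_DP(G·e, c·e)`. -/
theorem numColorings_deletion_contraction_ge {V : Type} [Fintype V] [DecidableEq V]
    (G : Multigraph V) (m : ℕ) (c : FullCover G m)
    (u v : V) (i : ℕ) (hi : i < G.mult u v) :
    ((c.deleteEdge u v i).numColorings : ℤ) - (c.contractEdge u v i).numColorings ≤
      (c.numColorings : ℤ) := by
  have := c.numColorings_deleteEdge_le hi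
  omega
end

section
/- For every multigraph G and every edge e with endpoints u,v such that e is the unique edge between u and v, and every m ∈ ℕ: P*_DP(G,m) ≤ P*_DP(G-e,m) - P_DP(G·e,m). -/
/-! For every cover `c` of `G`, the colorings of the induced cover of `G - e` split according to
whether they use the matching of `e` between the lists of `u` and `v`. Those that avoid it are
exactly the colorings of `c`, because `e` is the only edge joining `u` and `v`; those that use it
are determined by their restriction to `V \ {v}`, which is precisely a coloring of the cover of
`G · e` obtained by merging the two lists along that matching. Hence the numbers of colorings
satisfy `N(c - e) = N(c) + N(c · e)`, and taking `c` with `N(c) = P*_DP(G, m)` gives the bound. -/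

namespace Multigraph

variable {V : Type} (G : Multigraph V)

theorem ne_of_mult_pos_s13 {u v : V} (h : 0 < G.mult u v) : u ≠ v := by
  rintro rfl
  simp [G.loopless] at h

theorem mult_eq_of_sym2_eq {x y u v : V} (h : s(x, y) = s(u, v)) : G.mult x y = G.mult u v := by
  rcases Sym2.eq_iff.1 h with ⟨rfl, rfl⟩ | ⟨rfl, rfl⟩
  exacts [rfl, G.symm _ _]

end Multigraph

def matchedRestrictEquiv {V α : Type*} [DecidableEq V] (π : α → α) {u v : V} (hne : u ≠ v) :
    {f : V → α // π (f u) = f v} ≃ ({x : V // x ≠ v} → α) where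
  toFun f x := f.1 x
  invFun g := ⟨fun x => if h : x = v then π (g ⟨u, hne⟩) else g ⟨x, h⟩, by simp [hne]⟩
  left_inv f := by
    ext x
    by_cases h : x = v
    · subst h
      simp [f.2]
    · simp [h]
  right_inv g := by
    ext x
    simp [x.2]

namespace FullCover

variable {V : Type} {G : Multigraph V} {m : ℕ}

instance inst_s13 : Inhabited (FullCover G m) :=
  ⟨⟨fun _ _ _ => Equiv.refl _, fun _ _ _ => rfl⟩⟩

theorem bddAbove_numColorings [Finite V] :
    BddAbove {n | ∃ c : FullCover G m, n = c.numColorings} :=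
  ⟨Nat.card (V → Fin m), by rintro n ⟨c, rfl⟩; exact Finite.card_subtype_le _⟩

theorem numColorings_le_PDPdual [Finite V] (c : FullCover G m) : c.numColorings ≤ G.PDPdual m :=
  le_csSup bddAbove_numColorings ⟨c, rfl⟩

theorem PDP_le_numColorings (c : FullCover G m) : G.PDP m ≤ c.numColorings :=
  Nat.sInf_le ⟨c, rfl⟩

variable (c : FullCover G m)

/-- `(x, a)` and `(y, b)` are joined by a cross edge of the cover graph `H`. -/
def Adj (x : V) (a : Fin m) (y : V) (b : Fin m) : Prop :=
  ∃ j < G.mult x y, c.perm x y j a = b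

theorem isColoring_iff_forall_not_adj {f : V → Fin m} :
    c.IsColoring f ↔ ∀ x y, ¬c.Adj x (f x) y (f y) := by
  simp [IsColoring, Adj]

theorem not_adj_self (x : V) (a b : Fin m) : ¬c.Adj x a x b := by
  simp [Adj, G.loopless]

theorem adj_iff_of_mult_eq_one {u v : V} (he : G.mult u v = 1) {a b : Fin m} :
    c.Adj u a v b ↔ c.perm u v 0 a = b := by
  simp [Adj, he]

def IsColoringOff (e : Sym2 V) (f : V → Fin m) : Prop :=
  ∀ x y, s(x, y) ≠ e → ¬c.Adj x (f x) y (f y)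

theorem isColoring_iff_isColoringOff {u v : V} (he : G.mult u v = 1) {f : V → Fin m} :
    c.IsColoring f ↔ c.IsColoringOff s(u, v) f ∧ c.perm u v 0 (f u) ≠ f v := by
  rw [isColoring_iff_forall_not_adj, Ne, ← c.adj_iff_of_mult_eq_one he]
  refine ⟨fun h => ⟨fun x y _ => h x y, h u v⟩, fun ⟨hoff, huv⟩ x y => ?_⟩
  by_cases hxy : s(x, y) = s(u, v)
  · rcases Sym2.eq_iff.1 hxy with ⟨rfl, rfl⟩ | ⟨rfl, rfl⟩
    · exact huv
    · rintro ⟨j, hj, hperm⟩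
      exact huv ⟨j, G.symm x y ▸ hj, by rw [← hperm, c.compat, Equiv.symm_apply_apply]⟩
  · exact hoff x y hxy

section Deletion

variable [DecidableEq V] {u v x y : V} {a b : Fin m} (i : ℕ)

theorem adj_deleteEdge_of_ne (h : s(x, y) ≠ s(u, v)) :
    (c.deleteEdge u v i).Adj x a y b ↔ c.Adj x a y b := by
  rw [Ne, Sym2.eq_iff] at h
  simp [Adj, FullCover.deleteEdge, Multigraph.deleteEdge, h]

theorem not_adj_deleteEdge (he : G.mult u v = 1) (h : s(x, y) = s(u, v)) :
    ¬(c.deleteEdge u v i).Adj x a y b := by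
  have hmult : G.mult x y = 1 := G.mult_eq_of_sym2_eq h ▸ he
  rw [Sym2.eq_iff] at h
  simp [Adj, Multigraph.deleteEdge, h, hmult]

theorem isColoring_deleteEdge_iff (he : G.mult u v = 1) {f : V → Fin m} :
    (c.deleteEdge u v i).IsColoring f ↔ c.IsColoringOff s(u, v) f := by
  rw [isColoring_iff_forall_not_adj]
  refine forall₂_congr fun x y => ?_
  by_cases h : s(x, y) = s(u, v)
  · simp [h, c.not_adj_deleteEdge i he h]
  · simp [h, c.adj_deleteEdge_of_ne i h]

end Deletion

section Contraction

variable [DecidableEq V] {u v : V} {x y : {z : V // z ≠ v}} {a b : Fin m} (i : ℕ)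

theorem not_adj_contractEdge_of_eq (hx : x.1 = u) (hy : y.1 = u) :
    ¬(c.contractEdge u v i).Adj x a y b := by
  simp [Adj, Multigraph.contractEdge, hx, hy]

theorem adj_contractEdge_of_left_eq (hx : x.1 = u) (hy : y.1 ≠ u) :
    (c.contractEdge u v i).Adj x a y b ↔ c.Adj u a y b ∨ c.Adj v (c.perm u v i a) y b := by
  simp only [Adj, FullCover.contractEdge, Multigraph.contractEdge, hx, hy, and_false, if_false,
    if_true, exists_lt_add_iff_lt_left]
  exact or_congr (exists_congr fun j => and_congr_right fun hj => by rw [if_pos hj])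
    (exists_congr fun k => and_congr_right fun _ => by simp)

theorem adj_contractEdge_of_right_eq (hx : x.1 ≠ u) (hy : y.1 = u) :
    (c.contractEdge u v i).Adj x a y b ↔ c.Adj x a u b ∨ c.Adj x a v (c.perm u v i b) := by
  simp only [Adj, FullCover.contractEdge, Multigraph.contractEdge, hx, hy, false_and, if_false,
    if_true, exists_lt_add_iff_lt_left]
  exact or_congr (exists_congr fun j => and_congr_right fun hj => by rw [if_pos hj])
    (exists_congr fun k => and_congr_right fun _ => by simp [Equiv.symm_apply_eq])

theorem adj_contractEdge_of_ne (hx : x.1 ≠ u) (hy : y.1 ≠ u) :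
    (c.contractEdge u v i).Adj x a y b ↔ c.Adj x a y b := by
  simp [Adj, FullCover.contractEdge, Multigraph.contractEdge, hx, hy]

theorem isColoringOff_of_isColoring_contractEdge (hne : u ≠ v) {f : V → Fin m}
    (hf : c.perm u v i (f u) = f v) (h : (c.contractEdge u v i).IsColoring (fun x => f x.1)) :
    c.IsColoringOff s(u, v) f := by
  rw [isColoring_iff_forall_not_adj] at h
  intro x y hxy
  by_cases hxv : x = v <;> by_cases hyv : y = v
  · exact hxv ▸ hyv ▸ c.not_adj_self v _ _
  · have hyu : y ≠ u := fun hyu => hxy (by rw [hxv, hyu, Sym2.eq_swap])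
    have := h ⟨u, hne⟩ ⟨y, hyv⟩
    rw [c.adj_contractEdge_of_left_eq i (x := ⟨u, hne⟩) (y := ⟨y, hyv⟩) rfl hyu, hf] at this
    exact fun hadj => this (Or.inr (hxv ▸ hadj))
  · have hxu : x ≠ u := fun hxu => hxy (by rw [hxu, hyv])
    have := h ⟨x, hxv⟩ ⟨u, hne⟩
    rw [c.adj_contractEdge_of_right_eq i (x := ⟨x, hxv⟩) (y := ⟨u, hne⟩) hxu rfl,
      hf] at this
    exact fun hadj => this (Or.inr (hyv ▸ hadj))
  · have := h ⟨x, hxv⟩ ⟨y, hyv⟩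
    by_cases hxu : x = u <;> by_cases hyu : y = u
    · exact hxu ▸ hyu ▸ c.not_adj_self u _ _
    · rw [c.adj_contractEdge_of_left_eq i hxu hyu] at this
      exact fun hadj => this (Or.inl (hxu ▸ hadj))
    · rw [c.adj_contractEdge_of_right_eq i hxu hyu] at this
      exact fun hadj => this (Or.inl (hyu ▸ hadj))
    · rwa [c.adj_contractEdge_of_ne i hxu hyu] at this

theorem isColoring_contractEdge_of_isColoringOff {f : V → Fin m}
    (hf : c.perm u v i (f u) = f v) (h : c.IsColoringOff s(u, v) f) :
    (c.contractEdge u v i).IsColoring (fun x => f x.1) := by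
  rw [isColoring_iff_forall_not_adj]
  intro x y
  by_cases hxu : x.1 = u <;> by_cases hyu : y.1 = u
  · exact c.not_adj_contractEdge_of_eq i hxu hyu
  · rw [c.adj_contractEdge_of_left_eq i hxu hyu, hxu, hf, not_or]
    exact ⟨h u y (by simp [y.2, hyu]), h v y (by simp [y.2, hyu])⟩
  · rw [c.adj_contractEdge_of_right_eq i hxu hyu, hyu, hf, not_or]
    exact ⟨h x u (by simp [x.2, hxu]), h x v (by simp [x.2, hxu])⟩
  · rw [c.adj_contractEdge_of_ne i hxu hyu]
    exact h x y (by simp [x.2, hxu])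

theorem isColoring_contractEdge_iff (hne : u ≠ v) {f : V → Fin m}
    (hf : c.perm u v i (f u) = f v) :
    (c.contractEdge u v i).IsColoring (fun x => f x.1) ↔ c.IsColoringOff s(u, v) f :=
  ⟨c.isColoringOff_of_isColoring_contractEdge i hne hf,
    c.isColoring_contractEdge_of_isColoringOff i hf⟩

theorem numColorings_deleteEdge [Finite V] (he : G.mult u v = 1) :
    (c.deleteEdge u v 0).numColorings = c.numColorings + (c.contractEdge u v 0).numColorings := by
  classical
  have hne : u ≠ v := G.ne_of_mult_pos_s13 (he ▸ Nat.one_pos)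
  let Off := {f : V → Fin m // c.IsColoringOff s(u, v) f}
  let Matched (f : V → Fin m) : Prop := c.perm u v 0 (f u) = f v
  have hcolorings : {f : Off // ¬Matched f.1} ≃ {f // c.IsColoring f} :=
    (Equiv.subtypeSubtypeEquivSubtypeInter _ _).trans
      (Equiv.subtypeEquivRight fun f => (c.isColoring_iff_isColoringOff he).symm)
  have hcontracted : {f : Off // Matched f.1} ≃ {g // (c.contractEdge u v 0).IsColoring g} :=
    (Equiv.subtypeSubtypeEquivSubtypeInter _ _).trans <|
      (Equiv.subtypeEquivRight fun f => and_comm).trans <|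
      (Equiv.subtypeSubtypeEquivSubtypeInter Matched _).symm.trans <|
      Equiv.subtypeEquiv (matchedRestrictEquiv _ hne)
        fun f => (c.isColoring_contractEdge_iff 0 hne f.2).symm
  calc (c.deleteEdge u v 0).numColorings = Nat.card Off :=
        Nat.card_congr (Equiv.subtypeEquivRight fun f => c.isColoring_deleteEdge_iff 0 he)
    _ = Nat.card {f : Off // ¬Matched f.1} + Nat.card {f : Off // Matched f.1} := by
        rw [← Nat.card_sum]
        exact Nat.card_congr ((Equiv.sumCompl fun f : Off => Matched f.1).symm.trans
          (Equiv.sumComm _ _))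
    _ = c.numColorings + (c.contractEdge u v 0).numColorings := by
        rw [Nat.card_congr hcolorings, Nat.card_congr hcontracted]
        rfl

end Contraction

end FullCover

theorem Multigraph.exists_fullCover_numColorings_eq_PDPdual {V : Type} [Finite V]
    (G : Multigraph V) (m : ℕ) : ∃ c : FullCover G m, G.PDPdual m = c.numColorings :=
  Nat.sSup_mem (s := {n | ∃ c : FullCover G m, n = c.numColorings}) ⟨_, default, rfl⟩
    FullCover.bddAbove_numColorings

/-- Deletion-contraction upper bound for the dual DP color function: if `e` is
the unique edge joining `u` and `v` in the multigraph `G`, then for every `m`,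
`P*_DP(G,m) ≤ P*_DP(G-e,m) - P_DP(G·e,m)`. -/
theorem PDPdual_deletion_contraction_upper {V : Type} [Fintype V] [DecidableEq V]
    (G : Multigraph V) (u v : V) (he : G.mult u v = 1) (m : ℕ) :
    (G.PDPdual m : ℤ) ≤
      ((G.deleteEdge u v).PDPdual m : ℤ) - ((G.contractEdge u v).PDP m : ℤ) := by
  obtain ⟨c, hc⟩ := G.exists_fullCover_numColorings_eq_PDPdual m
  have hsplit := c.numColorings_deleteEdge he
  have hdel := (c.deleteEdge u v 0).numColorings_le_PDPdual
  have hcon := (c.contractEdge u v 0).PDP_le_numColorings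
  omega
end

section
/- Let G be the multigraph whose underlying graph is the even cycle C_{2k+2} with vertices v_1,...,v_{2k+2} in cyclic order, with exactly one edge between consecutive vertices v_i, v_{i+1} for i ∈ [2k+1] and exactly l parallel edges between v_1 and v_{2k+2}. Then for every m ≥ l+1, P_DP(G,m) = (m-1)^{2k+1}(m-l) - l. -/
/-- The multigraph whose underlying graph is the cycle `C_{2k+2}` with vertices
`0, 1, …, 2k+1` in cyclic order, with exactly one edge between consecutive
vertices `i, i+1` for `0 ≤ i ≤ 2k` and exactly `l` parallel edges between the
vertices `0` and `2k+1`. -/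
def cycleWithMultiEdge (k l : ℕ) : Multigraph (Fin (2 * k + 2)) where
  mult u v :=
    if u = v then 0
    else if u.val + 1 = v.val ∨ v.val + 1 = u.val then 1
    else if (u.val = 0 ∧ v.val = 2 * k + 1) ∨ (v.val = 0 ∧ u.val = 2 * k + 1) then l
    else 0
  symm := by
    intro u v
    try dsimp only
    by_cases h1 : u = v
    · rw [if_pos h1, if_pos h1.symm]
    · rw [if_neg h1, if_neg (Ne.symm h1)]
      by_cases h2 : u.val + 1 = v.val ∨ v.val + 1 = u.val
      · rw [if_pos h2, if_pos (Or.symm h2)]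
      · rw [if_neg h2, if_neg (fun h => h2 (Or.symm h))]
        by_cases h3 : (u.val = 0 ∧ v.val = 2 * k + 1) ∨ (v.val = 0 ∧ u.val = 2 * k + 1)
        · rw [if_pos h3, if_pos (Or.symm h3)]
        · rw [if_neg h3, if_neg (fun h => h3 (Or.symm h))]
  loopless := by intro v; simp

/-! Cutting the cycle at the multi-edge, an `H`-coloring is a coloring of the path
`0 — 1 — ⋯ — 2k+1` whose end colors `x, y` avoid the `l` matchings of the multi-edge. For a path
with `n` edges and arbitrary matchings, `m` times the number of colorings with end colors `x, y`
is `(m-1)^n - (-1)^n`, plus `m (-1)^n` when `y` is the image of `x` under the composite matching.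
For odd `n = 2k+1` this is at most `(m-1)^n + 1`, with equality off the
composite matching, so each start color loses at most `l ((m-1)^n + 1) / m` colorings to the
multi-edge. Equality holds for the cover whose path matchings are the identity and whose parallel
edges are shifts by `1, …, l`; these shifts are distinct and nonzero because `l < m`. -/

open Finset

section PathColoring

variable {α : Type*} (σ : ℕ → Equiv.Perm α)

def permProd : ℕ → Equiv.Perm α
  | 0 => 1
  | n + 1 => σ n * permProd n

theorem permProd_one (n : ℕ) : permProd (1 : ℕ → Equiv.Perm α) n = 1 := by
  induction n with
  | zero => rfl
  | succ n ih => simp [permProd, ih]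

/-- `a` is a coloring of the path `0 — 1 — ⋯ — n` in the full cover whose matching between the
lists of `i` and `i + 1` is `σ i`. -/
def IsPathColoring {n : ℕ} (a : Fin (n + 1) → α) : Prop :=
  ∀ i : Fin n, σ i (a i.castSucc) ≠ a i.succ

theorem isPathColoring_snoc {n : ℕ} (b : Fin (n + 1) → α) (y : α) :
    IsPathColoring σ (Fin.snoc (α := fun _ => α) b y) ↔
      IsPathColoring σ b ∧ σ n (b (Fin.last n)) ≠ y := by
  simp only [IsPathColoring, Fin.forall_fin_succ', Fin.succ_castSucc, Fin.snoc_castSucc,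
    Fin.succ_last, Fin.snoc_last, Fin.val_castSucc, Fin.val_last]

variable [DecidableEq α]

instance {n : ℕ} : DecidablePred (IsPathColoring σ (n := n)) := fun a => by
  unfold IsPathColoring; infer_instance

variable [Fintype α]

def pathColoringCount (n : ℕ) (x y : α) : ℕ :=
  #{a : Fin (n + 1) → α | a 0 = x ∧ a (Fin.last n) = y ∧ IsPathColoring σ a}

theorem card_filter_isPathColoring {n : ℕ} (E : α → α → Prop) [DecidableRel E] :
    #{a : Fin (n + 1) → α | E (a 0) (a (Fin.last n)) ∧ IsPathColoring σ a} =
      ∑ x, ∑ y, if E x y then pathColoringCount σ n x y else 0 := by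
  rw [card_eq_sum_card_fiberwise (f := fun a => (a 0, a (Fin.last n))) (t := univ)
    (fun _ _ => mem_univ _), ← univ_product_univ, sum_product]
  refine sum_congr rfl fun x _ => sum_congr rfl fun y _ => ?_
  rw [filter_filter, pathColoringCount]
  split_ifs with h
  · congr 1
    ext a
    simp only [mem_filter, mem_univ, true_and, Prod.mk.injEq]
    constructor
    · rintro ⟨⟨-, ha⟩, rfl, rfl⟩; exact ⟨rfl, rfl, ha⟩
    · rintro ⟨rfl, rfl, ha⟩; exact ⟨⟨h, ha⟩, rfl, rfl⟩
  · rw [card_eq_zero, filter_eq_empty_iff]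
    rintro a - ⟨⟨hE, -⟩, hxy⟩
    simp only [Prod.mk.injEq] at hxy
    exact h (hxy.1 ▸ hxy.2 ▸ hE)

theorem pathColoringCount_zero (x y : α) :
    pathColoringCount σ 0 x y = if x = y then 1 else 0 := by
  split_ifs with h
  · subst h
    rw [pathColoringCount, card_eq_one]
    refine ⟨fun _ => x, ?_⟩
    ext a
    simp [IsPathColoring, funext_iff, Fin.forall_fin_one]
  · rw [pathColoringCount, card_eq_zero, filter_eq_empty_iff]
    rintro a - ⟨rfl, h', -⟩
    exact h h'

theorem pathColoringCount_succ (n : ℕ) (x y : α) :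
    pathColoringCount σ (n + 1) x y =
      ∑ z, if σ n z ≠ y then pathColoringCount σ n x z else 0 := by
  have hinit : pathColoringCount σ (n + 1) x y =
      #{b : Fin (n + 1) → α | (b 0 = x ∧ σ n (b (Fin.last n)) ≠ y) ∧ IsPathColoring σ b} := by
    refine card_nbij' Fin.init (fun b => Fin.snoc b y) ?_ ?_ ?_ (fun b _ => Fin.init_snoc _ _)
    · intro a ha
      simp only [mem_coe, mem_filter, mem_univ, true_and] at ha ⊢
      obtain ⟨h0, rfl, ha⟩ := ha
      rw [← Fin.snoc_init_self a, isPathColoring_snoc] at ha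
      exact ⟨⟨h0, ha.2⟩, ha.1⟩
    · intro b hb
      simp only [mem_coe, mem_filter, mem_univ, true_and] at hb ⊢
      obtain ⟨⟨h0, hy⟩, hb⟩ := hb
      refine ⟨?_, Fin.snoc_last _ _, (isPathColoring_snoc σ b y).2 ⟨hb, hy⟩⟩
      rw [← Fin.castSucc_zero, Fin.snoc_castSucc, h0]
    · intro a ha
      simp only [mem_coe, mem_filter, mem_univ, true_and] at ha
      rw [← ha.2.1]
      exact Fin.snoc_init_self a
  rw [hinit, card_filter_isPathColoring σ (fun x' z => x' = x ∧ σ n z ≠ y)]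
  simp [ite_and]

theorem pathColoringCount_succ_add (n : ℕ) (x y : α) :
    pathColoringCount σ (n + 1) x y + pathColoringCount σ n x ((σ n).symm y) =
      ∑ z, pathColoringCount σ n x z := by
  rw [pathColoringCount_succ,
    ← sum_ite_eq_of_mem' univ ((σ n).symm y) (pathColoringCount σ n x) (mem_univ _),
    ← sum_add_distrib]
  refine sum_congr rfl fun z _ => ?_
  simp only [Equiv.eq_symm_apply]
  split_ifs <;> simp_all

theorem sum_pathColoringCount (n : ℕ) (x : α) :
    ∑ y, (pathColoringCount σ n x y : ℤ) = (Fintype.card α - 1) ^ n := by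
  induction n with
  | zero => simp [pathColoringCount_zero]
  | succ n ih =>
    have h : ∑ y, (pathColoringCount σ (n + 1) x y : ℤ) +
        ∑ y, (pathColoringCount σ n x ((σ n).symm y) : ℤ) =
          Fintype.card α * ∑ z, (pathColoringCount σ n x z : ℤ) := by
      simp only [← sum_add_distrib, ← Nat.cast_add, pathColoringCount_succ_add]
      simp
    rw [Equiv.sum_comp (σ n).symm (fun z => (pathColoringCount σ n x z : ℤ)), ih] at h
    linear_combination h

theorem card_mul_pathColoringCount (n : ℕ) (x y : α) :
    (Fintype.card α : ℤ) * pathColoringCount σ n x y = (Fintype.card α - 1) ^ n - (-1) ^ n +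
      if y = permProd σ n x then (Fintype.card α * (-1) ^ n : ℤ) else 0 := by
  induction n generalizing y with
  | zero => simp [pathColoringCount_zero, permProd, eq_comm]
  | succ n ih =>
    have hrec : (pathColoringCount σ (n + 1) x y : ℤ) +
        pathColoringCount σ n x ((σ n).symm y) = (Fintype.card α - 1) ^ n := by
      rw [← sum_pathColoringCount σ n x]; exact_mod_cast pathColoringCount_succ_add σ n x y
    have hy : y = permProd σ (n + 1) x ↔ (σ n).symm y = permProd σ n x := by
      rw [Equiv.symm_apply_eq]; rfl
    have ih' := ih ((σ n).symm y)
    simp only [hy]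
    split_ifs at ih' ⊢ <;> linear_combination (Fintype.card α : ℤ) * hrec - ih'

theorem card_mul_pathColoringCount_le {n : ℕ} (hn : Odd n) (x y : α) :
    (Fintype.card α : ℤ) * pathColoringCount σ n x y ≤ (Fintype.card α - 1) ^ n + 1 := by
  rw [card_mul_pathColoringCount, hn.neg_one_pow]
  split_ifs <;> linarith

theorem card_mul_pathColoringCount_of_ne {n : ℕ} (hn : Odd n) {x y : α}
    (hy : y ≠ permProd σ n x) :
    (Fintype.card α : ℤ) * pathColoringCount σ n x y = (Fintype.card α - 1) ^ n + 1 := by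
  rw [card_mul_pathColoringCount, hn.neg_one_pow, if_neg hy]
  ring

end PathColoring

theorem FullCover.perm_apply_ne_comm_s17 {V : Type} {G : Multigraph V} {m : ℕ} (c : FullCover G m)
    (u v : V) (i : ℕ) (a b : Fin m) : c.perm v u i b ≠ a ↔ c.perm u v i a ≠ b := by
  rw [c.compat, ne_eq, Equiv.symm_apply_eq, ne_comm]

theorem Multigraph.PDP_eq_of_forall_le {V : Type} {G : Multigraph V} {m : ℕ}
    (c₀ : FullCover G m) (h : ∀ c : FullCover G m, c₀.numColorings ≤ c.numColorings) :
    G.PDP m = c₀.numColorings :=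
  le_antisymm (Nat.sInf_le ⟨c₀, rfl⟩) (le_csInf ⟨_, c₀, rfl⟩ fun _ ⟨c, hc⟩ => hc ▸ h c)

namespace cycleWithMultiEdge

variable {k l m : ℕ}

theorem mult_of_lt {u v : Fin (2 * k + 2)} (h : u < v) :
    (cycleWithMultiEdge k l).mult u v =
      if v.val = u.val + 1 then 1 else if u = 0 ∧ v = Fin.last _ then l else 0 := by
  have : u.val < v.val := h
  simp only [cycleWithMultiEdge, Fin.ext_iff, Fin.val_zero, Fin.val_last]
  split_ifs <;> omega

theorem mult_castSucc_succ (e : Fin (2 * k + 1)) :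
    (cycleWithMultiEdge k l).mult e.castSucc e.succ = 1 := by
  rw [mult_of_lt Fin.castSucc_lt_succ, if_pos (by simp)]

theorem mult_zero_last (hk : 1 ≤ k) : (cycleWithMultiEdge k l).mult 0 (Fin.last _) = l := by
  rw [mult_of_lt (Fin.last_pos), if_neg (by rw [Fin.val_last, Fin.val_zero]; omega), if_pos ⟨rfl, rfl⟩]

def pathPerm (c : FullCover (cycleWithMultiEdge k l) m) (i : ℕ) : Equiv.Perm (Fin m) :=
  if h : i < 2 * k + 1 then c.perm (Fin.castSucc ⟨i, h⟩) (Fin.succ ⟨i, h⟩) 0 else 1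

def forbiddenColors (c : FullCover (cycleWithMultiEdge k l) m) (x : Fin m) : Finset (Fin m) :=
  (range l).image fun j => c.perm 0 (Fin.last _) j x

theorem isColoring_iff (hk : 1 ≤ k) (c : FullCover (cycleWithMultiEdge k l) m)
    (f : Fin (2 * k + 2) → Fin m) :
    c.IsColoring f ↔ f (Fin.last _) ∉ forbiddenColors c (f 0) ∧ IsPathColoring (pathPerm c) f := by
  simp only [forbiddenColors, mem_image, mem_range, not_exists, not_and]
  constructor
  · intro h
    refine ⟨fun j hj => h 0 (Fin.last _) j (by rwa [mult_zero_last hk]), fun e => ?_⟩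
    rw [pathPerm, dif_pos e.isLt]
    exact h e.castSucc e.succ 0 (by rw [mult_castSucc_succ]; exact one_pos)
  · rintro ⟨hend, hpath⟩
    have key : ∀ u v, u < v → ∀ i < (cycleWithMultiEdge k l).mult u v,
        c.perm u v i (f u) ≠ f v := by
      intro u v huv i hi
      rw [mult_of_lt huv] at hi
      split_ifs at hi with hsucc hends
      · obtain rfl : i = 0 := by omega
        have hu : u.val < 2 * k + 1 := by omega
        obtain rfl : v = Fin.succ ⟨u, hu⟩ := Fin.ext hsucc
        have := hpath ⟨u, hu⟩
        rwa [pathPerm, dif_pos hu] at this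
      · obtain ⟨rfl, rfl⟩ := hends
        exact hend i hi
      · omega
    intro u v i hi
    rcases lt_trichotomy u v with huv | rfl | hvu
    · exact key u v huv i hi
    · rw [Multigraph.loopless] at hi; omega
    · exact (c.perm_apply_ne_comm_s17 u v i _ _).1 (key v u hvu i (by rwa [Multigraph.symm]))

theorem numColorings_add_sum (hk : 1 ≤ k) (c : FullCover (cycleWithMultiEdge k l) m) :
    (c.numColorings : ℤ) +
        ∑ x, ∑ y ∈ forbiddenColors c x, (pathColoringCount (pathPerm c) (2 * k + 1) x y : ℤ) =
      m * (m - 1) ^ (2 * k + 1) := by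
  classical
  have hcount : c.numColorings = ∑ x, ∑ y,
      if y ∉ forbiddenColors c x then pathColoringCount (pathPerm c) (2 * k + 1) x y else 0 := by
    rw [FullCover.numColorings, Nat.card_eq_fintype_card, Fintype.card_subtype,
      ← card_filter_isPathColoring]
    exact congrArg card (filter_congr fun f _ => isColoring_iff hk c f)
  have hsplit : ∀ x, ∑ y, (if y ∉ forbiddenColors c x then
      (pathColoringCount (pathPerm c) (2 * k + 1) x y : ℤ) else 0) +
        ∑ y ∈ forbiddenColors c x, (pathColoringCount (pathPerm c) (2 * k + 1) x y : ℤ) =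
      (m - 1) ^ (2 * k + 1) := by
    intro x
    have htotal := sum_pathColoringCount (pathPerm c) (2 * k + 1) x
    rw [Fintype.card_fin] at htotal
    rw [← htotal, ← sum_filter, ← sum_filter_add_sum_filter_not univ (· ∉ forbiddenColors c x)]
    simp
  rw [hcount]
  push_cast
  rw [← sum_add_distrib, sum_congr rfl fun x _ => hsplit x]
  simp

theorem le_numColorings (hk : 1 ≤ k) (hm : 0 < m) (c : FullCover (cycleWithMultiEdge k l) m) :
    ((m : ℤ) - 1) ^ (2 * k + 1) * (m - l) - l ≤ c.numColorings := by
  set B : ℤ := ((m : ℤ) - 1) ^ (2 * k + 1) + 1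
  have hB : 0 ≤ B := add_nonneg (pow_nonneg (by omega) _) zero_le_one
  have hforb : ∀ x, (m : ℤ) * ∑ y ∈ forbiddenColors c x,
      (pathColoringCount (pathPerm c) (2 * k + 1) x y : ℤ) ≤ l * B := by
    intro x
    rw [mul_sum]
    calc _ ≤ ∑ _y ∈ forbiddenColors c x, B := sum_le_sum fun y _ => by
            simpa using card_mul_pathColoringCount_le (pathPerm c) (odd_two_mul_add_one k) x y
      _ = #(forbiddenColors c x) * B := by rw [sum_const, nsmul_eq_mul]
      _ ≤ l * B := by
        gcongr
        exact_mod_cast card_image_le.trans (card_range l).le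
  have htot : (m : ℤ) * ∑ x, ∑ y ∈ forbiddenColors c x,
      (pathColoringCount (pathPerm c) (2 * k + 1) x y : ℤ) ≤ m * (l * B) := by
    rw [mul_sum]
    exact (sum_le_sum fun x _ => hforb x).trans (by simp)
  have hsum := numColorings_add_sum hk c
  refine le_of_mul_le_mul_left ?_ (by exact_mod_cast hm : (0 : ℤ) < m)
  linear_combination htot - (m : ℤ) * hsum

open Fin.NatCast

def shiftCover (k l m : ℕ) [NeZero m] : FullCover (cycleWithMultiEdge k l) m where
  perm u v i := Equiv.addRight <|
    if u = 0 ∧ v = Fin.last _ then ((i + 1 : ℕ) : Fin m)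
    else if v = 0 ∧ u = Fin.last _ then -((i + 1 : ℕ) : Fin m) else 0
  compat u v i := by
    rw [Equiv.addRight_symm]
    congr 1
    split_ifs <;> simp_all

variable [NeZero m]

theorem pathPerm_shiftCover (hk : 1 ≤ k) : pathPerm (shiftCover k l m) = 1 := by
  funext i
  unfold pathPerm
  split_ifs with hi
  · have h₁ : ¬((Fin.castSucc ⟨i, hi⟩ : Fin (2 * k + 2)) = 0 ∧ Fin.succ ⟨i, hi⟩ = Fin.last _) := by
      simp only [Fin.ext_iff, Fin.val_castSucc, Fin.val_succ, Fin.val_zero, Fin.val_last]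
      omega
    have h₂ : ¬((Fin.succ ⟨i, hi⟩ : Fin (2 * k + 2)) = 0 ∧ Fin.castSucc ⟨i, hi⟩ = Fin.last _) :=
      fun h => Fin.succ_ne_zero _ h.1
    simp only [shiftCover, if_neg h₁, if_neg h₂, Equiv.addRight_zero]
    rfl
  · rfl

theorem forbiddenColors_shiftCover (x : Fin m) :
    forbiddenColors (shiftCover k l m) x = (range l).image fun j => x + ((j + 1 : ℕ) : Fin m) := by
  simp [forbiddenColors, shiftCover, add_assoc]

theorem card_forbiddenColors_shiftCover (hm : l < m) (x : Fin m) :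
    #(forbiddenColors (shiftCover k l m) x) = l := by
  rw [forbiddenColors_shiftCover, card_image_of_injOn, card_range]
  intro i hi j hj hij
  have := congrArg Fin.val (add_left_cancel hij)
  simp only [mem_coe, mem_range] at hi hj
  rw [Fin.val_cast_of_lt (by omega), Fin.val_cast_of_lt (by omega)] at this
  omega

theorem notMem_forbiddenColors_shiftCover (hm : l < m) (x : Fin m) :
    x ∉ forbiddenColors (shiftCover k l m) x := by
  rw [forbiddenColors_shiftCover, mem_image]
  rintro ⟨j, hj, hx⟩
  have := congrArg Fin.val (add_eq_left.1 hx)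
  rw [mem_range] at hj
  rw [Fin.val_cast_of_lt (by omega)] at this
  simp at this

theorem numColorings_shiftCover (hk : 1 ≤ k) (hm : l < m) :
    ((shiftCover k l m).numColorings : ℤ) = ((m : ℤ) - 1) ^ (2 * k + 1) * (m - l) - l := by
  set c := shiftCover k l m
  set B : ℤ := ((m : ℤ) - 1) ^ (2 * k + 1) + 1
  have hforb : ∀ x, (m : ℤ) * ∑ y ∈ forbiddenColors c x,
      (pathColoringCount (pathPerm c) (2 * k + 1) x y : ℤ) = l * B := by
    intro x
    have hy : ∀ y ∈ forbiddenColors c x,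
        (m : ℤ) * pathColoringCount (pathPerm c) (2 * k + 1) x y = B := by
      intro y hy
      have hne : y ≠ permProd (pathPerm c) (2 * k + 1) x := by
        rw [pathPerm_shiftCover hk, permProd_one]
        rintro rfl
        exact notMem_forbiddenColors_shiftCover hm y hy
      simpa using card_mul_pathColoringCount_of_ne _ (odd_two_mul_add_one k) hne
    rw [mul_sum, sum_congr rfl hy, sum_const, card_forbiddenColors_shiftCover hm, nsmul_eq_mul]
  have htot : (m : ℤ) * ∑ x, ∑ y ∈ forbiddenColors c x,
      (pathColoringCount (pathPerm c) (2 * k + 1) x y : ℤ) = m * (l * B) := by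
    rw [mul_sum, sum_congr rfl fun x _ => hforb x]
    simp
  have hsum := numColorings_add_sum hk c
  refine mul_left_cancel₀ (Nat.cast_ne_zero.2 (NeZero.ne m) : (m : ℤ) ≠ 0) ?_
  linear_combination (m : ℤ) * hsum - htot

end cycleWithMultiEdge

theorem PDP_cycle_with_multiedge_general (k l : ℕ) (hk : 1 ≤ k)
    (m : ℕ) (hm : l + 1 ≤ m) :
    ((cycleWithMultiEdge k l).PDP m : ℤ) =
      ((m : ℤ) - 1) ^ (2 * k + 1) * ((m : ℤ) - l) - l := by
  open cycleWithMultiEdge in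
  have : NeZero m := ⟨by omega⟩
  have hmin : ∀ c : FullCover (cycleWithMultiEdge k l) m,
      (shiftCover k l m).numColorings ≤ c.numColorings := fun c => by
    have := le_numColorings hk (by omega) c
    rw [← numColorings_shiftCover hk hm] at this
    exact_mod_cast this
  rw [Multigraph.PDP_eq_of_forall_le _ hmin, numColorings_shiftCover hk hm]

/-- For the multigraph `G` consisting of the cycle `C_{2k+2}` with one of its
edges replaced by `l` parallel edges, `P_DP(G,m) = (m-1)^{2k+1}(m-l) - l`
whenever `m ≥ l + 1`. -/
theorem PDP_cycle_with_multiedge (k l : ℕ) (hk : 1 ≤ k) (hl : 1 ≤ l)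
    (m : ℕ) (hm : l + 1 ≤ m) :
    ((cycleWithMultiEdge k l).PDP m : ℤ) =
      ((m : ℤ) - 1) ^ (2 * k + 1) * ((m : ℤ) - l) - l :=
  PDP_cycle_with_multiedge_general k l hk m hm
end
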